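/- Let G be a countable discrete group, C*_r(G) ⊆ B(ℓ²(G)) the reduced group C*-algebra generated by the left-translation unitaries λ_g, and j(a)(γ) = ⟨δ_γ, a δ_e⟩. Then for all a, b ∈ C*_r(G) and every γ ∈ G, the family η ↦ j(a)(η) · j(b)(η⁻¹γ) over η ∈ G is unconditionally summable in ℂ (equivalently, absolutely summable), and j(a b)(γ) = ∑_{η∈G} j(a)(η) · j(b)(η⁻¹γ), where a b is the composition of the operators a and b. -/

import Mathlib

/-- The element `j(a)(γ) = ⟨δ_γ, a δ_e⟩` of the ℓ²-matrix-coefficient map, for a bounded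
operator `a` on `ℓ²(G)`.  The inner product is conjugate-linear in the first variable. -/
noncomputable def jmap {G : Type*} [Group G] [DecidableEq G]
    (a : lp (fun _ : G => ℂ) 2 →L[ℂ] lp (fun _ : G => ℂ) 2) (γ : G) : ℂ :=
  inner (𝕜 := ℂ) (lp.single 2 γ (1 : ℂ)) (a (lp.single 2 (1 : G) (1 : ℂ)))

/-- The reduced group C*-algebra: the operator-norm closure of the ∗-subalgebra of
bounded operators on `ℓ²(G)` generated by the left-translation unitaries. -/
noncomputable def reducedGroupCStarAlgebra {G : Type*} [Group G]
    (lam : G → (lp (fun _ : G => ℂ) 2 →L[ℂ] lp (fun _ : G => ℂ) 2)) :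
    StarSubalgebra ℂ (lp (fun _ : G => ℂ) 2 →L[ℂ] lp (fun _ : G => ℂ) 2) :=
  (StarAlgebra.adjoin ℂ (Set.range lam)).topologicalClosure

/-!
Right translations `ρ_g f (x) = f (x g⁻¹)` are unitaries with `ρ_g* = ρ_{g⁻¹}` commuting with
every left translation `λ_h`, so their commutant is a norm-closed ∗-subalgebra containing all
`λ_h`, hence all of `C*_r(G)`. An operator `a` commuting with every `ρ_g` satisfies
`a δ_η = ρ_η (a δ_e)`, so expanding `f = ∑ f(η) δ_η` gives `(a f)(γ) = ∑_η (a δ_e)(γ η⁻¹) f(η)`: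
`a` acts as left convolution by `j(a) = a δ_e`. Taking `f = b δ_e = j(b)` gives the formula.
-/

open scoped ENNReal lp

section Reindex

variable {α β 𝕜 E : Type*} [NormedAddCommGroup E] {p : ℝ≥0∞}

theorem Memℓp.comp_equiv {f : β → E} (hf : Memℓp f p) (e : α ≃ β) :
    Memℓp (f ∘ e) p := by
  rcases p.trichotomy with rfl | rfl | hp
  · exact memℓp_zero <| (memℓp_zero_iff.1 hf).preimage e.injective.injOn
  · have hbdd := memℓp_infty_iff.1 hf
    rw [← e.surjective.range_comp] at hbdd
    exact memℓp_infty hbdd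
  · exact (memℓp_gen_iff hp).2 <| e.summable_iff.2 <| (memℓp_gen_iff hp).1 hf

variable [NormedField 𝕜] [NormedSpace 𝕜 E] [Fact (1 ≤ p)]

variable (𝕜 E p) in
noncomputable def lp.compEquiv (e : α ≃ β) : ℓ^p(β, E) ≃ₗᵢ[𝕜] ℓ^p(α, E) where
  toFun f := ⟨f ∘ e, (lp.memℓp f).comp_equiv e⟩
  invFun f := ⟨f ∘ e.symm, (lp.memℓp f).comp_equiv e.symm⟩
  map_add' _ _ := rfl
  map_smul' _ _ := rfl
  left_inv f := lp.ext <| funext fun b => congrArg f (e.apply_symm_apply b)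
  right_inv f := lp.ext <| funext fun a => congrArg f (e.symm_apply_apply a)
  norm_map' f := by
    rcases p.trichotomy with rfl | rfl | hp
    · exact absurd (Fact.out : (1 : ℝ≥0∞) ≤ 0) (by norm_num)
    · exact e.iSup_comp (g := fun b => ‖f b‖)
    · rw [lp.norm_eq_tsum_rpow hp, lp.norm_eq_tsum_rpow hp]
      exact congrArg (· ^ _) (e.tsum_eq fun b => ‖f b‖ ^ p.toReal)

@[simp]
theorem lp.compEquiv_symm (e : α ≃ β) :
    (lp.compEquiv 𝕜 E p e).symm = lp.compEquiv 𝕜 E p e.symm :=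
  rfl

end Reindex

section RightRegular

variable {𝕜 G : Type*} [RCLike 𝕜] [Group G]

variable (𝕜) in
noncomputable def rightRegular (g : G) : ℓ²(G, 𝕜) →L[𝕜] ℓ²(G, 𝕜) :=
  lp.compEquiv 𝕜 𝕜 2 (Equiv.mulRight g⁻¹)

theorem rightRegular_apply (g : G) (f : ℓ²(G, 𝕜)) (x : G) : rightRegular 𝕜 g f x = f (x * g⁻¹) :=
  rfl

theorem rightRegular_single [DecidableEq G] (g η : G) (c : 𝕜) :
    rightRegular 𝕜 g (lp.single 2 η c) = lp.single 2 (η * g) c := by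
  ext x
  simp only [rightRegular_apply, lp.single_apply, Pi.single_apply, mul_inv_eq_iff_eq_mul]

theorem star_rightRegular (g : G) :
    star (rightRegular 𝕜 g) = rightRegular 𝕜 g⁻¹ := by
  rw [rightRegular, LinearIsometryEquiv.star_eq_symm, lp.compEquiv_symm, Equiv.mulRight_symm,
    rightRegular]

theorem commute_rightRegular {T : ℓ²(G, 𝕜) →L[𝕜] ℓ²(G, 𝕜)} {h : G}
    (hT : ∀ f x, T f x = f (h⁻¹ * x)) (g : G) : Commute T (rightRegular 𝕜 g) := by
  ext f x
  simp only [mul_apply_eq_comp, hT, rightRegular_apply, mul_assoc]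

theorem hasSum_apply_of_commute_rightRegular [DecidableEq G] {a : ℓ²(G, 𝕜) →L[𝕜] ℓ²(G, 𝕜)}
    (ha : ∀ g, Commute a (rightRegular 𝕜 g)) (f : ℓ²(G, 𝕜)) (γ : G) :
    HasSum (fun η => a (lp.single 2 1 1) η * f (η⁻¹ * γ)) (a f γ) := by
  set u := a (lp.single 2 1 1)
  have hterm (η : G) : a (lp.single 2 η (f η)) γ = f η * u (γ * η⁻¹) := by
    have hδ : lp.single 2 η (f η) = f η • rightRegular 𝕜 η (lp.single 2 1 (1 : 𝕜)) := by
      rw [rightRegular_single, one_mul, ← lp.single_smul, smul_eq_mul, mul_one]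
    rw [hδ, map_smul, ← mul_apply_eq_comp, (ha η).eq, mul_apply_eq_comp, lp.coeFn_smul,
      Pi.smul_apply, rightRegular_apply, smul_eq_mul]
  have hsum : HasSum (fun η => f η * u (γ * η⁻¹)) (a f γ) := by
    simpa only [lp.evalCLM, LinearMap.mkContinuous_apply, lp.evalₗ_apply, hterm] using
      ((lp.hasSum_single (by norm_num) f).mapL a).mapL (lp.evalCLM 𝕜 _ 2 γ)
  refine (((Equiv.inv G).trans (Equiv.mulRight γ)).hasSum_iff.2 hsum).congr_fun fun η => ?_
  simp only [Function.comp_apply, Equiv.trans_apply, Equiv.inv_apply, Equiv.coe_mulRight,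
    mul_inv_rev, inv_inv, mul_inv_cancel_left, mul_comm]

end RightRegular

theorem commute_rightRegular_of_mem_reducedGroupCStarAlgebra {G : Type*} [Group G]
    {lam : G → ℓ²(G, ℂ) →L[ℂ] ℓ²(G, ℂ)} (hlam : ∀ g f x, lam g f x = f (g⁻¹ * x))
    {a : ℓ²(G, ℂ) →L[ℂ] ℓ²(G, ℂ)} (ha : a ∈ reducedGroupCStarAlgebra lam) (g : G) :
    Commute a (rightRegular ℂ g) := by
  have hle : reducedGroupCStarAlgebra lam ≤
      StarSubalgebra.centralizer ℂ (Set.range (rightRegular ℂ (G := G))) := by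
    refine StarSubalgebra.topologicalClosure_minimal (StarAlgebra.adjoin_le ?_)
      (Set.isClosed_centralizer _)
    rintro _ ⟨h, rfl⟩
    rw [SetLike.mem_coe, StarSubalgebra.mem_centralizer_iff]
    rintro _ ⟨g, rfl⟩
    rw [star_rightRegular]
    exact ⟨(commute_rightRegular (hlam h) g).symm.eq, (commute_rightRegular (hlam h) g⁻¹).symm.eq⟩
  exact ((StarSubalgebra.mem_centralizer_iff ℂ).1 (hle ha) _ ⟨g, rfl⟩).1.symm

theorem jmap_eq_apply {G : Type*} [Group G] [DecidableEq G] (a : ℓ²(G, ℂ) →L[ℂ] ℓ²(G, ℂ))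
    (γ : G) : jmap a γ = a (lp.single 2 1 1) γ := by
  rw [jmap, lp.inner_single_left, RCLike.inner_apply, map_one, mul_one]

theorem jmap_mul_general {G : Type*} [Group G] [DecidableEq G]
    (lam : G → (lp (fun _ : G => ℂ) 2 →L[ℂ] lp (fun _ : G => ℂ) 2))
    (hlam : ∀ (g : G) (f : lp (fun _ : G => ℂ) 2) (x : G), lam g f x = f (g⁻¹ * x)) :
    ∀ a ∈ reducedGroupCStarAlgebra lam, ∀ b ∈ reducedGroupCStarAlgebra lam, ∀ γ : G,
      HasSum (fun η : G => jmap a η * jmap b (η⁻¹ * γ)) (jmap (a * b) γ) := by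
  intro a ha b _ γ
  simpa only [jmap_eq_apply, mul_apply_eq_comp] using hasSum_apply_of_commute_rightRegular
    (commute_rightRegular_of_mem_reducedGroupCStarAlgebra hlam ha) (b (lp.single 2 1 1)) γ

/-- The convolution formula for Renault's `j`-map on the reduced group C*-algebra of a
countable discrete group: for `a, b ∈ C*_r(G)` and `γ ∈ G`, the family
`η ↦ j(a)(η) · j(b)(η⁻¹γ)` is unconditionally summable with sum `j(ab)(γ)`,
where `a * b` is composition of operators. -/
theorem jmap_mul {G : Type*} [Group G] [Countable G] [DecidableEq G]
    (lam : G → (lp (fun _ : G => ℂ) 2 →L[ℂ] lp (fun _ : G => ℂ) 2))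
    (hlam : ∀ (g : G) (f : lp (fun _ : G => ℂ) 2) (x : G), lam g f x = f (g⁻¹ * x)) :
    ∀ a ∈ reducedGroupCStarAlgebra lam, ∀ b ∈ reducedGroupCStarAlgebra lam, ∀ γ : G,
      HasSum (fun η : G => jmap a η * jmap b (η⁻¹ * γ)) (jmap (a * b) γ) :=
  jmap_mul_general lam hlam
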